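/- Let B be a finite candidate set of nodes, let k' be the number of nodes already verified to be in the top-k (so that k − k' nodes remain to be selected from B, with 1 ≤ k − k' < |B|), let p : B → [0,1], and let ε, δ ∈ (0,1). On a probability space, let X_1, …, X_t be independent, identically distributed measurable maps from Ω to [0,1]^B with E[X_i(v)] = p(v) for every v ∈ B and every i, and define p̂(v) = (1/t)·Σ_{i=1}^t X_i(v). If t ≥ (2/ε²)·ln((k−k')·(|B|−(k−k'))/δ), then with probability at least 1 − δ: every subset R ⊆ B with |R| = k − k' satisfying p̂(u) ≥ p̂(w) for all u ∈ R and w ∈ B \ R satisfies (1) p(v) ≥ Q − ε for all v ∈ R, and (2) p(v) < Q + ε for all v ∈ B \ R, where Q is the (k−k')-th largest value of p over B. -/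

import Mathlib

/-
Let `Q` be the `(k - k')`-th largest value of `p` and `T` a set of `k - k'` nodes with `p ≥ Q` on
`T` and `p ≤ Q` off `T`. For `w ∈ T` and `u ∉ T` with `p u + ε ≤ p w`, the estimates misorder `w`
and `u` only if the `[-1, 1]`-valued differences `X i w - X i u`, of mean at least `ε`, have a
nonpositive sum; by Hoeffding's inequality this has probability at most `exp (-t ε² / 2)`. A union
bound over the `(k - k')(|B| - (k - k'))` pairs in `T × (B \ T)` and the choice of `t` bound the
probability of any such misordering by `δ`. Outside that event, a selected node with
`p v < Q - ε` lies outside `T`, so some unselected node of `T` beats it; an unselected node with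
`p v ≥ Q + ε` lies in `T` and beats some selected node outside `T`.
-/

open MeasureTheory ProbabilityTheory

/-- The `j`-th largest value attained by `f` on the finite type `B`
(the `j`-th entry, 1-indexed, of the list of values of `f` sorted in
non-increasing order). -/
noncomputable def kthLargest {B : Type*} [Fintype B] (f : B → ℝ) (j : ℕ) : ℝ :=
  ((Finset.univ.val.map f).sort (· ≥ ·)).getD (j - 1) 0

open Finset Real

namespace List

variable {l : List ℝ} {i : ℕ}

lemma Pairwise.getElem_le_getElem (hl : l.Pairwise (· ≥ ·)) {i j : ℕ} (hij : i ≤ j)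
    (hj : j < l.length) : l[j] ≤ l[i] :=
  hl.rel_get_of_le (a := ⟨i, by omega⟩) (b := ⟨j, hj⟩) hij

lemma Pairwise.countP_getElem_lt_le (hl : l.Pairwise (· ≥ ·)) (hi : i < l.length) :
    l.countP (l[i] < ·) ≤ i := by
  have hsplit := congrArg (countP (l[i] < ·)) (take_append_drop i l)
  have hdrop : (l.drop i).countP (l[i] < ·) = 0 := by
    refine countP_eq_zero.mpr fun x hx => ?_
    obtain ⟨j, hj, rfl⟩ := mem_iff_getElem.mp hx
    simpa [getElem_drop] using hl.getElem_le_getElem (Nat.le_add_right i j) _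
  rw [countP_append, hdrop, add_zero] at hsplit
  rw [← hsplit]
  exact countP_le_length.trans (length_take_le _ _)

lemma Pairwise.le_countP_getElem_le (hl : l.Pairwise (· ≥ ·)) (hi : i < l.length) :
    i + 1 ≤ l.countP (l[i] ≤ ·) := by
  have hsplit := congrArg (countP (l[i] ≤ ·)) (take_append_drop (i + 1) l)
  have htake : (l.take (i + 1)).countP (l[i] ≤ ·) = i + 1 := by
    rw [countP_eq_length.mpr, length_take]
    · omega
    · intro x hx
      obtain ⟨j, hj, rfl⟩ := mem_iff_getElem.mp hx
      simp only [length_take] at hj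
      simpa [getElem_take] using hl.getElem_le_getElem (by omega : j ≤ i) hi
  rw [countP_append, htake] at hsplit
  omega

end List

namespace Finset

lemma exists_mem_notMem_of_card_eq {α : Type*} {s t : Finset α} (h : #s = #t) {a : α}
    (has : a ∈ s) (hat : a ∉ t) : ∃ b ∈ t, b ∉ s := by
  classical
  have : (t \ s).Nonempty := by
    rw [← card_pos, card_sdiff_comm h.symm]
    exact card_pos.mpr ⟨a, mem_sdiff.mpr ⟨has, hat⟩⟩
  obtain ⟨b, hb⟩ := this
  exact ⟨b, (mem_sdiff.mp hb).1, (mem_sdiff.mp hb).2⟩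

end Finset

section kthLargest

variable {B : Type*} [Fintype B]

lemma card_filter_eq_countP_sort (p : B → ℝ) (q : ℝ → Prop) [DecidablePred q] :
    #{v | q (p v)} = ((univ.val.map p).sort (· ≥ ·)).countP (q ·) := by
  rw [← Multiset.coe_countP, Multiset.sort_eq, Multiset.countP_map]
  rfl

lemma exists_card_eq_kthLargest_le (p : B → ℝ) {m : ℕ} (hm : 1 ≤ m)
    (hmB : m ≤ Fintype.card B) :
    ∃ T : Finset B, #T = m ∧ (∀ w ∈ T, kthLargest p m ≤ p w) ∧
      ∀ u ∉ T, p u ≤ kthLargest p m := by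
  classical
  set s := (univ.val.map p).sort (· ≥ ·)
  have hs : s.Pairwise (· ≥ ·) := Multiset.pairwise_sort _ _
  have hi : m - 1 < s.length := by simp [s]; omega
  have hQ : kthLargest p m = s[m - 1] := List.getD_eq_getElem _ _ hi
  have hgt : #{v | kthLargest p m < p v} ≤ m - 1 := by
    rw [card_filter_eq_countP_sort, hQ]; exact hs.countP_getElem_lt_le hi
  have hge : m - 1 + 1 ≤ #{v | kthLargest p m ≤ p v} := by
    rw [card_filter_eq_countP_sort, hQ]; exact hs.le_countP_getElem_le hi
  have hsub :
      ({v | kthLargest p m < p v} : Finset B) ⊆ ({v | kthLargest p m ≤ p v} : Finset B) :=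
    monotone_filter_right univ fun _ _ => le_of_lt
  obtain ⟨T, hgtT, hTge, hTcard⟩ :=
    exists_subsuperset_card_eq hsub (n := m) (by omega) (by omega)
  refine ⟨T, hTcard, fun w hw => (mem_filter.mp (hTge hw)).2, fun u hu => ?_⟩
  by_contra! hlt
  exact hu (hgtT (mem_filter.mpr ⟨mem_univ u, hlt⟩))

end kthLargest

lemma forall_mem_sub_le_and_forall_notMem_lt_add {B : Type*} {p S : B → ℝ} {Q ε : ℝ}
    {T R : Finset B} (hε : 0 < ε) (hcard : #R = #T) (hT : ∀ w ∈ T, Q ≤ p w)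
    (hTc : ∀ u ∉ T, p u ≤ Q)
    (hS : ∀ w ∈ T, ∀ u ∉ T, p u + ε ≤ p w → S u < S w)
    (hR : ∀ u ∈ R, ∀ w ∉ R, S w ≤ S u) :
    (∀ v ∈ R, Q - ε ≤ p v) ∧ (∀ v ∉ R, p v < Q + ε) := by
  constructor
  · intro v hvR
    by_contra! hv
    have hvT : v ∉ T := fun hvT => by linarith [hT v hvT]
    obtain ⟨w, hwT, hwR⟩ := exists_mem_notMem_of_card_eq hcard hvR hvT
    linarith [hS w hwT v hvT (by linarith [hT w hwT]), hR v hvR w hwR]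
  · intro v hvR
    by_contra! hv
    have hvT : v ∈ T := by by_contra hvT; linarith [hTc v hvT]
    obtain ⟨u, huR, huT⟩ := exists_mem_notMem_of_card_eq hcard.symm hvT hvR
    linarith [hS v hvT u huT (by linarith [hTc u huT]), hR u huR v hvR]

lemma mul_exp_neg_le_of_two_div_sq_mul_log_le {M δ ε t : ℝ} (hM : 0 < M) (hδ : 0 < δ)
    (hε : 0 < ε) (ht : 2 / ε ^ 2 * log (M / δ) ≤ t) : M * exp (-(t * ε ^ 2) / 2) ≤ δ := by
  rw [div_mul_eq_mul_div, div_le_iff₀ (by positivity)] at ht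
  have hexp : M / δ ≤ exp (t * ε ^ 2 / 2) :=
    (log_le_iff_le_exp (by positivity)).mp (by linarith)
  rw [div_le_iff₀ hδ] at hexp
  rw [neg_div, exp_neg, ← div_eq_mul_inv, div_le_iff₀ (exp_pos _)]
  linarith

section Hoeffding

variable {Ω : Type*} [MeasurableSpace Ω] {μ : Measure Ω} [IsProbabilityMeasure μ]

lemma measureReal_le_sum_sub_integral_le_exp {ι : Type*} {Y : ι → Ω → ℝ}
    (hind : iIndepFun Y μ) (hmeas : ∀ i, AEMeasurable (Y i) μ)
    (hb : ∀ i, ∀ᵐ ω ∂μ, Y i ω ∈ Set.Icc (-1 : ℝ) 1) (s : Finset ι) {ε : ℝ} (hε : 0 ≤ ε) :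
    μ.real {ω | ε ≤ ∑ i ∈ s, (Y i ω - μ[Y i])} ≤ exp (-ε ^ 2 / (2 * #s)) := by
  have hsubG : ∀ i ∈ s, HasSubgaussianMGF (fun ω => Y i ω - μ[Y i]) 1 μ := fun i _ => by
    convert hasSubgaussianMGF_of_mem_Icc (hmeas i) (hb i)
    rw [← NNReal.coe_inj]
    norm_num
  simpa using HasSubgaussianMGF.measure_sum_ge_le_of_iIndepFun
    (hind.comp (fun i x => x - μ[Y i]) fun _ => measurable_id.sub_const _) hsubG hε

lemma measureReal_sum_le_sum_le_exp {ι B : Type*} [Fintype ι] {X : ι → Ω → B → ℝ}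
    (hmeas : ∀ i, Measurable (X i)) (hind : iIndepFun X μ)
    (hrange : ∀ i, ∀ᵐ ω ∂μ, ∀ v, X i ω v ∈ Set.Icc (0 : ℝ) 1)
    {p : B → ℝ} (hmean : ∀ i v, ∫ ω, X i ω v ∂μ = p v)
    {u w : B} {ε : ℝ} (hε : 0 ≤ ε) (hgap : p w + ε ≤ p u) :
    μ.real {ω | ∑ i, X i ω u ≤ ∑ i, X i ω w} ≤ exp (-(Fintype.card ι * ε ^ 2) / 2) := by
  set Y : ι → Ω → ℝ := fun i ω => X i ω w - X i ω u
  have hcoord : ∀ i v, AEMeasurable (fun ω => X i ω v) μ := fun i v =>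
    ((measurable_pi_apply v).comp (hmeas i)).aemeasurable
  have hYmean : ∀ i, μ[Y i] = p w - p u := fun i => by
    have hint : ∀ v, Integrable (fun ω => X i ω v) μ := fun v =>
      Integrable.of_mem_Icc 0 1 (hcoord i v) (by filter_upwards [hrange i] with ω h using h v)
    simp only [Y]
    rw [integral_sub (hint w) (hint u), hmean, hmean]
  have hYind : iIndepFun Y μ :=
    hind.comp (fun _ f => f w - f u) fun _ => (measurable_pi_apply w).sub (measurable_pi_apply u)
  have hYb : ∀ i, ∀ᵐ ω ∂μ, Y i ω ∈ Set.Icc (-1 : ℝ) 1 := fun i => by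
    filter_upwards [hrange i] with ω h
    constructor <;> linarith [(h u).1, (h u).2, (h w).1, (h w).2]
  have hsub : {ω | ∑ i, X i ω u ≤ ∑ i, X i ω w} ⊆
      {ω | Fintype.card ι * ε ≤ ∑ i, (Y i ω - μ[Y i])} := fun ω hω => by
    simp only [Set.mem_ofPred_eq, hYmean, Y, sum_sub_distrib, sum_const, card_univ,
      nsmul_eq_mul] at hω ⊢
    nlinarith [(Nat.cast_nonneg (Fintype.card ι) : (0 : ℝ) ≤ _)]
  calc μ.real {ω | ∑ i, X i ω u ≤ ∑ i, X i ω w}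
      ≤ exp (-(Fintype.card ι * ε) ^ 2 / (2 * Fintype.card ι)) :=
        (measureReal_mono hsub).trans <| by
          simpa using measureReal_le_sum_sub_integral_le_exp hYind
            (fun i => (hcoord i w).sub (hcoord i u)) hYb univ (by positivity)
    _ = exp (-(Fintype.card ι * ε ^ 2) / 2) := by
        rcases eq_or_ne (Fintype.card ι : ℝ) 0 with h | h
        · simp [h]
        · congr 1; field_simp

lemma measureReal_exists_misordered_pair_le {ι B : Type*} [Fintype ι] [Fintype B]
    [DecidableEq B] {X : ι → Ω → B → ℝ} (hmeas : ∀ i, Measurable (X i)) (hind : iIndepFun X μ)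
    (hrange : ∀ i, ∀ᵐ ω ∂μ, ∀ v, X i ω v ∈ Set.Icc (0 : ℝ) 1)
    {p : B → ℝ} (hmean : ∀ i v, ∫ ω, X i ω v ∂μ = p v) {ε : ℝ} (hε : 0 ≤ ε) (T : Finset B) :
    μ.real {ω | ∃ w ∈ T, ∃ u ∉ T, p u + ε ≤ p w ∧ ∑ i, X i ω w ≤ ∑ i, X i ω u} ≤
      #T * #Tᶜ * exp (-(Fintype.card ι * ε ^ 2) / 2) := by
  set A : B × B → Set Ω := fun q => {ω | p q.2 + ε ≤ p q.1 ∧ ∑ i, X i ω q.1 ≤ ∑ i, X i ω q.2}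
  have hA : ∀ q, μ.real (A q) ≤ exp (-(Fintype.card ι * ε ^ 2) / 2) := fun q => by
    by_cases hgap : p q.2 + ε ≤ p q.1
    · exact (measureReal_mono fun ω h => h.2).trans
        (measureReal_sum_le_sum_le_exp hmeas hind hrange hmean hε hgap)
    · simp only [A, hgap, false_and, Set.ofPred_false, measureReal_empty]
      positivity
  have hcover : {ω | ∃ w ∈ T, ∃ u ∉ T, p u + ε ≤ p w ∧ ∑ i, X i ω w ≤ ∑ i, X i ω u} ⊆
      ⋃ q ∈ T ×ˢ Tᶜ, A q := by
    rintro ω ⟨w, hw, u, hu, hgap, hle⟩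
    exact Set.mem_biUnion (x := (w, u)) (mem_product.mpr ⟨hw, mem_compl.mpr hu⟩) ⟨hgap, hle⟩
  calc _ ≤ μ.real (⋃ q ∈ T ×ˢ Tᶜ, A q) := measureReal_mono hcover (measure_ne_top _ _)
    _ ≤ ∑ q ∈ T ×ˢ Tᶜ, μ.real (A q) := measureReal_biUnion_finset_le _ _
    _ ≤ ∑ _q ∈ T ×ˢ Tᶜ, exp (-(Fintype.card ι * ε ^ 2) / 2) := sum_le_sum fun q _ => hA q
    _ = #T * #Tᶜ * exp (-(Fintype.card ι * ε ^ 2) / 2) := by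
        rw [sum_const, card_product, nsmul_eq_mul, Nat.cast_mul]

lemma one_sub_le_measureReal_of_compl_subset {s t : Set Ω} {δ : ℝ} (hst : tᶜ ⊆ s)
    (ht : μ.real t ≤ δ) : 1 - δ ≤ μ.real s := by
  have hunion : t ∪ s = Set.univ := Set.compl_subset_iff_union.mp hst
  have := measureReal_union_le (μ := μ) t s
  rw [hunion, probReal_univ] at this
  linarith

end Hoeffding

theorem stmt5_general
    {B : Type*} [Fintype B]
    {Ω : Type*} [MeasureSpace Ω] [IsProbabilityMeasure (ℙ : Measure Ω)]
    (k k' : ℕ) (hk' : k' < k) (hkB : k - k' < Fintype.card B)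
    (p : B → ℝ)
    (ε δ : ℝ) (hε : ε ∈ Set.Ioo (0 : ℝ) 1) (hδ : δ ∈ Set.Ioo (0 : ℝ) 1)
    (t : ℕ) (X : Fin t → Ω → B → ℝ)
    (hmeas : ∀ i, Measurable (X i))
    (hindep : iIndepFun X ℙ)
    (hrange : ∀ i, ∀ᵐ ω ∂ℙ, ∀ v, X i ω v ∈ Set.Icc (0 : ℝ) 1)
    (hmean : ∀ i v, ∫ ω, X i ω v ∂ℙ = p v)
    (ht : (2 / ε ^ 2) *
        Real.log (((k : ℝ) - (k' : ℝ)) *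
          ((Fintype.card B : ℝ) - ((k : ℝ) - (k' : ℝ))) / δ) ≤ (t : ℝ)) :
    1 - δ ≤ (ℙ {ω | ∀ R : Finset B, R.card = k - k' →
        (∀ u ∈ R, ∀ w ∉ R,
          (∑ i, X i ω w) / (t : ℝ) ≤ (∑ i, X i ω u) / (t : ℝ)) →
        (∀ v ∈ R, kthLargest p (k - k') - ε ≤ p v) ∧
        (∀ v ∉ R, p v < kthLargest p (k - k') + ε)}).toReal := by
  classical
  obtain ⟨hε0, -⟩ := hε
  obtain ⟨hδ0, hδ1⟩ := hδ
  obtain ⟨T, hTcard, hT, hTc⟩ :=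
    exists_card_eq_kthLargest_le p (m := k - k') (by omega) hkB.le
  have hpairs : (#T * #Tᶜ : ℝ) = (k - k') * (Fintype.card B - (k - k')) := by
    rw [card_compl, hTcard, Nat.cast_sub hkB.le, Nat.cast_sub hk'.le]
  have hδpairs : δ < #T * #Tᶜ := by
    have : 1 ≤ #T * #Tᶜ := Nat.mul_pos (by omega) (by rw [card_compl]; omega)
    exact hδ1.trans_le (by exact_mod_cast this)
  rw [← hpairs] at ht
  have htpos : (0 : ℝ) < t := by
    have := log_pos ((one_lt_div hδ0).mpr hδpairs)
    exact lt_of_lt_of_le (by positivity) ht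
  have hbad := (measureReal_exists_misordered_pair_le hmeas hindep hrange hmean hε0.le T).trans
    (mul_exp_neg_le_of_two_div_sq_mul_log_le (hδ0.trans hδpairs) hδ0 hε0
      (by rwa [Fintype.card_fin]))
  refine one_sub_le_measureReal_of_compl_subset (fun ω hω R hR hsel => ?_) hbad
  refine forall_mem_sub_le_and_forall_notMem_lt_add (S := fun v => (∑ i, X i ω v) / t) hε0
    (hR.trans hTcard.symm) hT hTc (fun w hw u hu hgap => ?_) hsel
  by_contra! hle
  exact hω ⟨w, hw, u, hu, hgap, (div_le_div_iff_of_pos_right htpos).mp hle⟩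

/-- Theorem 5 of the paper: after pruning verifies `k'` nodes and reduces the
candidate set to `B`, the reverse sampling algorithm selecting the remaining
`k - k'` nodes from `B` by largest estimated value is an
`(ε, δ)`-approximation with sample size `t ≥ (2/ε²)·ln((k-k')(|B|-k+k')/δ)`. -/
theorem stmt5
    {B : Type*} [Fintype B] [DecidableEq B]
    {Ω : Type*} [MeasureSpace Ω] [IsProbabilityMeasure (ℙ : Measure Ω)]
    (k k' : ℕ) (hk' : k' < k) (hkB : k - k' < Fintype.card B)
    (p : B → ℝ) (hp : ∀ v, p v ∈ Set.Icc (0 : ℝ) 1)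
    (ε δ : ℝ) (hε : ε ∈ Set.Ioo (0 : ℝ) 1) (hδ : δ ∈ Set.Ioo (0 : ℝ) 1)
    (t : ℕ) (X : Fin t → Ω → B → ℝ)
    (hmeas : ∀ i, Measurable (X i))
    (hindep : iIndepFun X ℙ)
    (hident : ∀ i j, IdentDistrib (X i) (X j) ℙ ℙ)
    (hrange : ∀ i, ∀ᵐ ω ∂ℙ, ∀ v, X i ω v ∈ Set.Icc (0 : ℝ) 1)
    (hmean : ∀ i v, ∫ ω, X i ω v ∂ℙ = p v)
    (ht : (2 / ε ^ 2) *
        Real.log (((k : ℝ) - (k' : ℝ)) *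
          ((Fintype.card B : ℝ) - ((k : ℝ) - (k' : ℝ))) / δ) ≤ (t : ℝ)) :
    1 - δ ≤ (ℙ {ω | ∀ R : Finset B, R.card = k - k' →
        (∀ u ∈ R, ∀ w ∉ R,
          (∑ i, X i ω w) / (t : ℝ) ≤ (∑ i, X i ω u) / (t : ℝ)) →
        (∀ v ∈ R, kthLargest p (k - k') - ε ≤ p v) ∧
        (∀ v ∉ R, p v < kthLargest p (k - k') + ε)}).toReal :=
  stmt5_general k k' hk' hkB p ε δ hε hδ t X hmeas hindep hrange hmean ht
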